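/- arXiv:2603.21176 — 2 statements merged into one kernel-verified Lean document; each statement's English description precedes it below -/
import Mathlib

section
/- Let φ₁,…,φ_d be real numbers and G₁,…,G_d be i.i.d. standard Gumbel random variables. Then P(argmax_j (φ_j + G_j) = i) = exp(φ_i) / Σ_j exp(φ_j) for each index i (the Gumbel-Max trick). -/
open MeasureTheory ProbabilityTheory
open Real Filter Set

noncomputable def gumF (a x : ℝ) : ℝ := Real.exp (-a * Real.exp (-x))
noncomputable def gumf (a x : ℝ) : ℝ := a * Real.exp (-x) * Real.exp (-a * Real.exp (-x))

lemma gumf_nonneg (a : ℝ) (ha : 0 < a) (x : ℝ) : 0 ≤ gumf a x := by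
  unfold gumf; positivity

lemma hasDerivAt_gumF (a x : ℝ) : HasDerivAt (gumF a) (gumf a x) x := by
  have h1 : HasDerivAt (fun x : ℝ => -x) (-1) x := (hasDerivAt_id x).neg
  have h2 := h1.exp
  have h3 := (h2.const_mul (-a)).exp
  convert h3 using 1
  · rfl
  unfold gumf; ring

lemma continuous_gumf (a : ℝ) : Continuous (gumf a) := by
  unfold gumf; continuity

lemma tendsto_gumF_atBot (a : ℝ) (ha : 0 < a) : Tendsto (gumF a) atBot (nhds 0) := by
  have h1 : Tendsto (fun x : ℝ => Real.exp (-x)) atBot atTop :=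
    Real.tendsto_exp_atTop.comp tendsto_neg_atBot_atTop
  have h2 : Tendsto (fun x : ℝ => a * Real.exp (-x)) atBot atTop := h1.const_mul_atTop ha
  have h3 : Tendsto (fun x : ℝ => -a * Real.exp (-x)) atBot atBot := by
    have := tendsto_neg_atTop_atBot.comp h2
    simpa [Function.comp_def, neg_mul] using this
  exact Real.tendsto_exp_atBot.comp h3

lemma tendsto_gumF_atTop (a : ℝ) : Tendsto (gumF a) atTop (nhds 1) := by
  have h1 : Tendsto (fun x : ℝ => Real.exp (-x)) atTop (nhds 0) :=
    Real.tendsto_exp_atBot.comp tendsto_neg_atTop_atBot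
  have h2 : Tendsto (fun x : ℝ => -a * Real.exp (-x)) atTop (nhds 0) := by
    simpa using h1.const_mul (-a)
  have := (Real.continuous_exp.tendsto 0).comp h2
  have h4 : gumF a = fun x => Real.exp (-(a * Real.exp (-x))) := by
    funext x; simp [gumF, neg_mul]
  rw [h4]
  simpa [Function.comp_def] using this

lemma intervalIntegral_gumf (a : ℝ) (ha : 0 < a) {y t : ℝ} (hyt : y ≤ t) :
    ∫ x in y..t, gumf a x = gumF a t - gumF a y :=
  intervalIntegral.integral_eq_sub_of_hasDerivAt
    (fun x _ => hasDerivAt_gumF a x)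
    ((continuous_gumf a).intervalIntegrable y t)

lemma integrableOn_gumf_Iic (a : ℝ) (ha : 0 < a) (t : ℝ) :
    IntegrableOn (gumf a) (Iic t) := by
  refine integrableOn_Iic_of_intervalIntegral_norm_bounded (f := gumf a) (l := atBot)
    (a := fun y : ℝ => y) 1 t (fun y => ((continuous_gumf a).integrableOn_Ioc)) tendsto_id ?_
  filter_upwards [eventually_le_atBot t] with y hy
  have h1 : (∫ x in y..t, ‖gumf a x‖) = ∫ x in y..t, gumf a x := by
    apply intervalIntegral.integral_congr
    intro x _
    exact Real.norm_of_nonneg (gumf_nonneg a ha x)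
  rw [h1, intervalIntegral_gumf a ha hy]
  have h2 : gumF a t ≤ 1 := by
    unfold gumF
    rw [← Real.exp_zero]
    apply Real.exp_le_exp.2
    have : 0 ≤ a * Real.exp (-y) := by positivity
    nlinarith [Real.exp_pos (-t)]
  have h3 : 0 ≤ gumF a y := Real.exp_nonneg _
  linarith

lemma integrable_gumf (a : ℝ) (ha : 0 < a) : Integrable (gumf a) := by
  have hIoi : IntegrableOn (gumf a) (Ioi 0) := by
    have hexp : IntegrableOn (fun x : ℝ => a * Real.exp (-1 * x)) (Ioi 0) :=
      (exp_neg_integrableOn_Ioi 0 one_pos).const_mul a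
    refine Integrable.mono' hexp ((continuous_gumf a).aestronglyMeasurable) ?_
    filter_upwards with x
    rw [Real.norm_of_nonneg (gumf_nonneg a ha x)]
    unfold gumf
    have h1 : Real.exp (-a * Real.exp (-x)) ≤ 1 := by
      rw [← Real.exp_zero]
      apply Real.exp_le_exp.2
      have : 0 ≤ a * Real.exp (-x) := by positivity
      linarith
    have h2 : 0 < Real.exp (-x) := Real.exp_pos _
    simp only [neg_one_mul]
    have h3 : 0 ≤ a * Real.exp (-x) := by positivity
    nlinarith
  have := (integrableOn_gumf_Iic a ha 0).union hIoi
  rwa [Iic_union_Ioi, integrableOn_univ] at this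

lemma integral_Iic_gumf (a : ℝ) (ha : 0 < a) (t : ℝ) :
    ∫ x in Iic t, gumf a x = gumF a t := by
  have := integral_Iic_of_hasDerivAt_of_tendsto' (f := gumF a) (f' := gumf a)
    (fun x _ => hasDerivAt_gumF a x) (integrableOn_gumf_Iic a ha t) (tendsto_gumF_atBot a ha)
  simpa using this

lemma integral_gumf (a : ℝ) (ha : 0 < a) : ∫ x, gumf a x = 1 := by
  have := integral_of_hasDerivAt_of_tendsto (f := gumF a) (f' := gumf a)
    (fun x => hasDerivAt_gumF a x) (integrable_gumf a ha) (tendsto_gumF_atBot a ha)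
    (tendsto_gumF_atTop a)
  simpa using this

noncomputable def gumbelMeasure : Measure ℝ :=
  volume.withDensity (fun x => ENNReal.ofReal (gumf 1 x))

lemma gumbelMeasure_Iic (t : ℝ) :
    gumbelMeasure (Iic t) = ENNReal.ofReal (Real.exp (-Real.exp (-t))) := by
  rw [gumbelMeasure, withDensity_apply _ measurableSet_Iic]
  rw [← ofReal_integral_eq_lintegral_ofReal (integrableOn_gumf_Iic 1 one_pos t)
    (Filter.Eventually.of_forall (gumf_nonneg 1 one_pos))]
  rw [integral_Iic_gumf 1 one_pos t]
  simp [gumF]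

instance : IsProbabilityMeasure gumbelMeasure := by
  constructor
  rw [gumbelMeasure, withDensity_apply _ MeasurableSet.univ, Measure.restrict_univ]
  rw [← ofReal_integral_eq_lintegral_ofReal (integrable_gumf 1 one_pos)
    (Filter.Eventually.of_forall (gumf_nonneg 1 one_pos))]
  rw [integral_gumf 1 one_pos]
  simp

instance : NullSingletonClass gumbelMeasure :=
  ⟨fun x => withDensity_absolutelyContinuous _ _ (measure_singleton x)⟩

lemma eq_gumbelMeasure_of_cdf (ν : Measure ℝ) [IsProbabilityMeasure ν]
    (h : ∀ t, ν (Iic t) = ENNReal.ofReal (Real.exp (-Real.exp (-t)))) :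
    ν = gumbelMeasure := by
  refine MeasureTheory.Measure.ext_of_Iic ν gumbelMeasure (fun t => ?_)
  rw [h t, gumbelMeasure_Iic t]


/-- The Gumbel-Max trick: if `G₁,…,G_d` are i.i.d. standard Gumbel random variables
(CDF `exp(-exp(-g))`) and `φ : Fin d → ℝ` are logits, then for each index `i`,
`P(argmax_j (φ_j + G_j) = i) = exp (φ i) / ∑ j, exp (φ j)`, where the argmax event
is that `φ i + G i` strictly exceeds all other coordinates (a.s. unique). -/
theorem gumbel_max_trick
    {Ω : Type*} [MeasurableSpace Ω] (μ : Measure Ω) [IsProbabilityMeasure μ]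
    {d : ℕ} (hd : 0 < d) (φ : Fin d → ℝ) (G : Fin d → Ω → ℝ)
    (hGm : ∀ j, Measurable (G j))
    (hindep : iIndepFun G μ)
    (hcdf : ∀ j (g : ℝ), μ {ω | G j ω ≤ g} = ENNReal.ofReal (Real.exp (-Real.exp (-g)))) :
    ∀ i : Fin d,
      μ {ω | ∀ j, j ≠ i → φ j + G j ω < φ i + G i ω}
        = ENNReal.ofReal (Real.exp (φ i) / ∑ j, Real.exp (φ j)) := by
  intro i
  obtain ⟨n, rfl⟩ : ∃ n, d = n + 1 := ⟨d - 1, (Nat.succ_pred_eq_of_pos hd).symm⟩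
  -- the law of each G j is the Gumbel measure
  have hmap : ∀ j, Measure.map (G j) μ = gumbelMeasure := by
    intro j
    haveI : IsProbabilityMeasure (Measure.map (G j) μ) :=
      Measure.isProbabilityMeasure_map (hGm j).aemeasurable
    refine eq_gumbelMeasure_of_cdf _ (fun t => ?_)
    rw [Measure.map_apply (hGm j) measurableSet_Iic]
    exact hcdf j t
  -- the joint law is the product measure
  set T : Ω → (Fin (n + 1) → ℝ) := fun ω j => G j ω with hT
  have hTm : Measurable T := measurable_pi_lambda _ hGm
  have hjoint : Measure.map T μ = Measure.pi (fun _ : Fin (n + 1) => gumbelMeasure) := by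
    refine (Measure.pi_eq (fun s hs => ?_)).symm
    rw [Measure.map_apply hTm (MeasurableSet.univ_pi hs)]
    have hpre : T ⁻¹' (Set.pi Set.univ s) = ⋂ j, G j ⁻¹' s j := by
      ext ω; simp [hT, Set.mem_pi]
    rw [hpre]
    have h2 := (iIndepFun_iff_measure_inter_preimage_eq_mul.mp hindep)
      Finset.univ (fun j _ => hs j)
    simp only [Finset.mem_univ, Set.iInter_true] at h2
    rw [h2]
    refine Finset.prod_congr rfl (fun j _ => ?_)
    rw [← hmap j, Measure.map_apply (hGm j) (hs j)]
  -- express the event as a preimage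
  set S : Set (Fin (n + 1) → ℝ) := {x | ∀ j, j ≠ i → φ j + x j < φ i + x i} with hS
  have hSm : MeasurableSet S := by
    have : S = ⋂ j, ⋂ (_ : j ≠ i), {x : Fin (n + 1) → ℝ | φ j + x j < φ i + x i} := by
      ext x; simp [hS]
    rw [this]
    refine MeasurableSet.iInter (fun j => MeasurableSet.iInter (fun _ => ?_))
    exact measurableSet_lt (measurable_const.add (measurable_pi_apply j))
      (measurable_const.add (measurable_pi_apply i))
  have hev : {ω | ∀ j, j ≠ i → φ j + G j ω < φ i + G i ω} = T ⁻¹' S := rfl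
  rw [hev, ← Measure.map_apply hTm hSm, hjoint]
  -- split off coordinate i
  set e := MeasurableEquiv.piFinSuccAbove (fun _ : Fin (n + 1) => ℝ) i with he
  set S' : Set (ℝ × (Fin n → ℝ)) :=
    {p | ∀ k, φ (i.succAbove k) + p.2 k < φ i + p.1} with hS'
  have hS'm : MeasurableSet S' := by
    have : S' = ⋂ k, {p : ℝ × (Fin n → ℝ) | φ (i.succAbove k) + p.2 k < φ i + p.1} := by
      ext p; simp [hS']
    rw [this]
    refine MeasurableSet.iInter (fun k => ?_)
    exact measurableSet_lt
      (measurable_const.add (measurable_snd.eval (a := k)))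
      (measurable_const.add measurable_fst)
  have hpre2 : S = e ⁻¹' S' := by
    ext x
    simp only [hS, hS', Set.mem_setOf_eq, Set.mem_preimage, he,
      MeasurableEquiv.piFinSuccAbove_apply, Fin.removeNth]
    constructor
    · intro h k
      exact h (i.succAbove k) (Fin.succAbove_ne i k)
    · intro h j hj
      obtain ⟨k, rfl⟩ := Fin.exists_succAbove_eq hj
      exact h k
  rw [hpre2]
  have hmp := measurePreserving_piFinSuccAbove (fun _ : Fin (n + 1) => gumbelMeasure) i
  rw [hmp.measure_preimage hS'm.nullMeasurableSet]
  set c := ∑ k : Fin n, Real.exp (φ (i.succAbove k) - φ i) with hc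
  have hc0 : 0 ≤ c := Finset.sum_nonneg fun k _ => (Real.exp_pos _).le
  have h1c : 0 < 1 + c := by linarith
  rw [Measure.prod_apply hS'm]
  have hsec : ∀ g : ℝ, (Prod.mk g ⁻¹' S')
      = Set.pi Set.univ (fun k => Iio (φ i + g - φ (i.succAbove k))) := by
    intro g
    ext y
    simp only [hS', Set.mem_preimage, Set.mem_setOf_eq, Set.mem_pi, Set.mem_univ,
      Set.mem_Iio, forall_true_left]
    exact forall_congr' fun k => by constructor <;> intro <;> linarith
  have hinner : ∀ g : ℝ, (Measure.pi fun _ : Fin n => gumbelMeasure) (Prod.mk g ⁻¹' S')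
      = ENNReal.ofReal (Real.exp (-(c * Real.exp (-g)))) := by
    intro g
    rw [hsec g, Measure.pi_pi]
    have hIio : ∀ t : ℝ, gumbelMeasure (Iio t) = ENNReal.ofReal (Real.exp (-Real.exp (-t))) := by
      intro t
      rw [measure_congr Iio_ae_eq_Iic, gumbelMeasure_Iic]
    simp_rw [hIio]
    rw [← ENNReal.ofReal_prod_of_nonneg (fun k _ => (Real.exp_nonneg _))]
    congr 1
    rw [← Real.exp_sum]
    congr 1
    rw [hc, Finset.sum_mul, ← Finset.sum_neg_distrib]
    refine Finset.sum_congr rfl (fun k _ => ?_)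
    rw [← Real.exp_add]
    congr 1
    ring
  rw [lintegral_congr hinner]
  have hdm : Measurable fun x : ℝ => ENNReal.ofReal (gumf 1 x) :=
    (continuous_gumf 1).measurable.ennreal_ofReal
  have hgm2 : Measurable fun g : ℝ => ENNReal.ofReal (Real.exp (-(c * Real.exp (-g)))) := by
    apply Measurable.ennreal_ofReal
    exact (Real.continuous_exp.comp ((continuous_const.mul
      (Real.continuous_exp.comp continuous_neg)).neg)).measurable
  rw [gumbelMeasure, lintegral_withDensity_eq_lintegral_mul _ hdm hgm2]
  have hpt : ∀ g : ℝ, ((fun x : ℝ => ENNReal.ofReal (gumf 1 x)) *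
        fun g : ℝ => ENNReal.ofReal (Real.exp (-(c * Real.exp (-g))))) g
      = ENNReal.ofReal (1 / (1 + c)) * ENNReal.ofReal (gumf (1 + c) g) := by
    intro g
    simp only [Pi.mul_apply]
    rw [← ENNReal.ofReal_mul (gumf_nonneg 1 one_pos g), ← ENNReal.ofReal_mul (by positivity)]
    congr 1
    have hE : Real.exp (-(1:ℝ) * Real.exp (-g)) * Real.exp (-(c * Real.exp (-g)))
        = Real.exp (-(1 + c) * Real.exp (-g)) := by
      rw [← Real.exp_add]
      congr 1
      ring
    unfold gumf
    rw [← hE]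
    field_simp
  rw [lintegral_congr hpt, lintegral_const_mul _ ((continuous_gumf (1 + c)).measurable.ennreal_ofReal)]
  have hint : (∫⁻ g, ENNReal.ofReal (gumf (1 + c) g)) = 1 := by
    rw [← ofReal_integral_eq_lintegral_ofReal (integrable_gumf _ h1c)
      (Filter.Eventually.of_forall (gumf_nonneg _ h1c)), integral_gumf _ h1c]
    simp
  rw [hint, mul_one]
  congr 1
  have hsum : (∑ j, Real.exp (φ j))
      = Real.exp (φ i) + ∑ k : Fin n, Real.exp (φ (i.succAbove k)) :=
    Fin.sum_univ_succAbove (fun j => Real.exp (φ j)) i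
  rw [hsum, hc]
  have hrw : ∀ k : Fin n, Real.exp (φ (i.succAbove k) - φ i)
      = Real.exp (φ (i.succAbove k)) / Real.exp (φ i) := fun k => Real.exp_sub _ _
  simp_rw [hrw]
  rw [← Finset.sum_div]
  have hE : (0:ℝ) < Real.exp (φ i) := Real.exp_pos _
  have hSpos : (0:ℝ) < Real.exp (φ i) + ∑ k : Fin n, Real.exp (φ (i.succAbove k)) := by
    have : (0:ℝ) ≤ ∑ k : Fin n, Real.exp (φ (i.succAbove k)) :=
      Finset.sum_nonneg fun k _ => (Real.exp_pos _).le
    linarith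
  field_simp
end

section
/- If U ~ Uniform(0,1) and G_T = φ - log(exp(φ - T) - log U), then G_T has the distribution of a Gumbel(φ) random variable conditioned to be at most T; that is, P(G_T ≤ g) = exp(-exp(-(g-φ))) / exp(-exp(-(T-φ))) for all g ≤ T. -/
/-!
The sampler is the inverse-CDF transform: for `u ∈ (0,1)` its output is at most `g` exactly when
`u ≤ exp (exp (φ - T) - exp (φ - g))`, and this threshold is the ratio of the two Gumbel CDFs.
For `g ≤ T` it is at most `1`, so its uniform probability is the threshold itself.
-/

open MeasureTheory Set Real

theorem volume_restrict_Ioo_zero_one_Iic {c : ℝ} (hc : c ≤ 1) :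
    volume.restrict (Ioo (0 : ℝ) 1) (Iic c) = ENNReal.ofReal c := by
  rw [Measure.restrict_congr_set Ioo_ae_eq_Ioc, Measure.restrict_apply measurableSet_Iic,
    Iic_inter_Ioc_of_le hc, Real.volume_Ioc, sub_zero]

theorem sub_log_sub_log_le_iff {a u φ g : ℝ} (hu : 0 < u) (hau : 0 < a - log u) :
    φ - log (a - log u) ≤ g ↔ u ≤ exp (a - exp (φ - g)) :=
  calc φ - log (a - log u) ≤ g ↔ φ - g ≤ log (a - log u) := sub_le_comm
    _ ↔ exp (φ - g) ≤ a - log u := le_log_iff_exp_le hau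
    _ ↔ log u ≤ a - exp (φ - g) := le_sub_comm
    _ ↔ u ≤ exp (a - exp (φ - g)) := log_le_iff_le_exp hu

theorem setOf_sub_log_sub_log_le_inter_Ioo {a φ g : ℝ} (ha : 0 < a) :
    {u | φ - log (a - log u) ≤ g} ∩ Ioo 0 1 = Iic (exp (a - exp (φ - g))) ∩ Ioo 0 1 := by
  ext u
  simp only [mem_inter_iff, mem_ofPred_eq, mem_Iic, and_congr_left_iff]
  rintro ⟨hu0, hu1⟩
  exact sub_log_sub_log_le_iff hu0 (by linarith [log_neg hu0 hu1])

theorem exp_neg_exp_div_exp_neg_exp (φ g T : ℝ) :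
    exp (-exp (-(g - φ))) / exp (-exp (-(T - φ))) = exp (exp (φ - T) - exp (φ - g)) := by
  rw [← exp_sub, neg_sub, neg_sub]; ring_nf

theorem truncated_gumbel_cdf_general
    {Ω : Type*} [MeasurableSpace Ω] (μ : Measure Ω)
    (U : Ω → ℝ) (hUm : Measurable U)
    (hU : Measure.map U μ = (volume.restrict (Set.Ioo (0:ℝ) 1)))
    (φ T : ℝ) :
    ∀ g : ℝ, g ≤ T →
      μ {ω | φ - Real.log (Real.exp (φ - T) - Real.log (U ω)) ≤ g}
        = ENNReal.ofReal
            (Real.exp (-Real.exp (-(g - φ))) / Real.exp (-Real.exp (-(T - φ)))) := by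
  intro g hg
  have hS : MeasurableSet {u : ℝ | φ - log (exp (φ - T) - log u) ≤ g} :=
    measurableSet_le (by fun_prop) measurable_const
  have hc : exp (exp (φ - T) - exp (φ - g)) ≤ 1 :=
    exp_le_one_iff.mpr (sub_nonpos.mpr (exp_le_exp.mpr (by linarith)))
  calc μ {ω | φ - log (exp (φ - T) - log (U ω)) ≤ g}
      = volume.restrict (Ioo 0 1) {u | φ - log (exp (φ - T) - log u) ≤ g} := by
        rw [← hU, Measure.map_apply hUm hS]; rfl
    _ = volume.restrict (Ioo 0 1) (Iic (exp (exp (φ - T) - exp (φ - g)))) := by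
        rw [Measure.restrict_apply' measurableSet_Ioo, Measure.restrict_apply' measurableSet_Ioo,
          setOf_sub_log_sub_log_le_inter_Ioo (exp_pos _)]
    _ = _ := by rw [volume_restrict_Ioo_zero_one_Iic hc, exp_neg_exp_div_exp_neg_exp]

/-- Correctness of the truncated Gumbel sampler: if `U ~ Uniform(0,1)` and
`G_T = φ - log(exp(φ - T) - log U)`, then `G_T` is distributed as a `Gumbel(φ)` random
variable conditioned to be at most `T`:
`P(G_T ≤ g) = exp(-exp(-(g-φ))) / exp(-exp(-(T-φ)))` for all `g ≤ T`. -/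
theorem truncated_gumbel_cdf
    {Ω : Type*} [MeasurableSpace Ω] (μ : Measure Ω) [IsProbabilityMeasure μ]
    (U : Ω → ℝ) (hUm : Measurable U)
    (hU : Measure.map U μ = (volume.restrict (Set.Ioo (0:ℝ) 1)))
    (φ T : ℝ) :
    ∀ g : ℝ, g ≤ T →
      μ {ω | φ - Real.log (Real.exp (φ - T) - Real.log (U ω)) ≤ g}
        = ENNReal.ofReal
            (Real.exp (-Real.exp (-(g - φ))) / Real.exp (-Real.exp (-(T - φ)))) :=
  truncated_gumbel_cdf_general μ U hUm hU φ T
end
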